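/- Let n ≥ 2 and let D be the weighted adjacency matrix of the complete directed graph on n nodes in which every arc (u,v), u ≠ v, carries its own distinct indeterminate weight x_{uv} (so k = n² − n and the arc weights are the coordinate functions on the parameter domain [0,∞)^k). Fix a target node t. Then any two distinct directed paths with the same start node and end node t have incomparable weights in the pointwise partial order on [0,∞)^k; consequently every directed spanning tree toward t is a shortest-path tree, and the number of shortest-path trees with target t equals the number n^{n−2} of labeled spanning trees of the complete graph on n nodes. -/

import Mathlib

/-!
Every arc weight is a free nonnegative variable, so evaluating at the indicator vector of an arc
turns the weight of a walk into the number of times it uses that arc. Two distinct simple paths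
to `t` from the same start differ in some arc, which separates their weights in both directions;
and for a spanning tree toward `t`, with the tree-path weights as potentials, a non-tree arc
`(v, w)` is never strictly better, because at its indicator the potential of `v` vanishes.
So the shortest-path trees are exactly the spanning trees toward `t`, counted by Cayley's formula:
unrolling the cycles of a self-map fixing `t` into a path ending at `t` (Joyal) identifies such
maps with trees toward `t` together with a vertex, whence `n ^ (n - 1) = n * #trees`.
-/

/-- An entry of a parameterized weighted adjacency matrix with variables indexed by `ι`:
`none` is `∞` (no arc), `some (c, none)` is the constant weight `c`, `some (c, some i)`
is the weight `c + x_i`. -/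
abbrev Entry (ι : Type) := Option (ℝ × Option ι)

/-- Evaluation of an entry at a parameter vector. -/
noncomputable def entryEval {ι : Type} (e : Entry ι) (x : ι → ℝ) : ℝ :=
  match e with
  | none => 0
  | some (c, none) => c
  | some (c, some i) => c + x i

/-- Pointwise `≤` on the parameter domain described by `P`. -/
def leOn {ι : Type} (P : (ι → ℝ) → Prop) (f g : (ι → ℝ) → ℝ) : Prop :=
  ∀ x, P x → f x ≤ g x

/-- Strict pointwise `<` (i.e. `≤` and not `≥`) on the parameter domain `P`. -/
def ltOn {ι : Type} (P : (ι → ℝ) → Prop) (f g : (ι → ℝ) → ℝ) : Prop :=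
  leOn P f g ∧ ¬ leOn P g f

/-- The total weight of the walk starting at `u` visiting the nodes of `l`, as a function
of the parameters. -/
noncomputable def walkFn {n : ℕ} {ι : Type} (E : Fin n → Fin n → Entry ι) :
    Fin n → List (Fin n) → (ι → ℝ) → ℝ
  | _, [] => fun _ => 0
  | u, w :: l => fun x => entryEval (E u w) x + walkFn E w l x

/-- `par` encodes a shortest-path tree toward `t`. -/
def IsSPT {n : ℕ} {ι : Type} (E : Fin n → Fin n → Entry ι) (P : (ι → ℝ) → Prop)
    (t : Fin n) (par : Fin n → Fin n) : Prop :=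
  par t = t ∧ (∀ v, ∃ m : ℕ, par^[m] v = t) ∧
  (∀ v, v ≠ t → (E v (par v)).isSome) ∧
  ∃ p : Fin n → (ι → ℝ) → ℝ,
    p t = (fun _ => 0) ∧
    (∀ v, v ≠ t → p v = fun x => entryEval (E v (par v)) x + p (par v) x) ∧
    (∀ v w : Fin n, (E v w).isSome →
      ¬ ltOn P (fun x => entryEval (E v w) x + p w x) (p v))

open Function Set

section Dynamics

variable {α : Type*} {f g : α → α}

theorem Finite.exists_iterate_mem_periodicPts [Finite α] (f : α → α) (x : α) :
    ∃ m, f^[m] x ∈ periodicPts f := by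
  obtain ⟨i, j, hij, he⟩ := Finite.exists_ne_map_eq_of_infinite (fun k : ℕ => f^[k] x)
  wlog hlt : i < j generalizing i j
  · exact this j i hij.symm he.symm (by omega)
  refine ⟨i, mk_mem_periodicPts (n := j - i) (by omega) ?_⟩
  rw [IsPeriodicPt, IsFixedPt, ← iterate_add_apply, Nat.sub_add_cancel hlt.le]
  exact he.symm

theorem exists_iterate_mem_of_eqOn_compl {C : Set α} (h : EqOn f g Cᶜ) {x : α} {m : ℕ}
    (hm : f^[m] x ∈ C) : ∃ k, g^[k] x ∈ C := by
  induction m generalizing x with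
  | zero => exact ⟨0, hm⟩
  | succ m ih =>
    by_cases hx : x ∈ C
    · exact ⟨0, hx⟩
    · rw [iterate_succ_apply, h hx] at hm
      obtain ⟨k, hk⟩ := ih hm
      exact ⟨k + 1, by rwa [iterate_succ_apply]⟩

theorem periodicPts_eq_of_mapsTo_of_injOn {C : Set α} (hC : C.Finite) (hmaps : MapsTo f C C)
    (hinj : InjOn f C) (hreach : ∀ x, ∃ k, f^[k] x ∈ C) : periodicPts f = C := by
  refine Subset.antisymm (fun x hx => ?_) (fun x hx => ?_)
  · obtain ⟨n, hn, hper⟩ := mem_periodicPts.1 hx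
    obtain ⟨k, hk⟩ := hreach x
    have hkn : k ≤ k * n := Nat.le_mul_of_pos_right k hn
    rw [← (hper.const_mul k).eq, ← Nat.sub_add_cancel hkn, iterate_add_apply]
    exact hmaps.iterate _ hk
  · have : Finite C := hC.to_subtype
    have hsemi : Semiconj ((↑) : C → α) (hmaps.restrict f C C) f := hmaps.val_restrict_apply
    exact hsemi.mapsTo_periodicPts ((hmaps.restrict_inj.2 hinj).mem_periodicPts ⟨x, hx⟩)

theorem bijOn_periodicPts_diff_singleton {t : α} (hg : g t = t) :
    BijOn g (periodicPts g \ {t}) (periodicPts g \ {t}) := by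
  have ht : t ∈ periodicPts g := mk_mem_periodicPts one_pos hg
  simpa [hg] using (bijOn_periodicPts g).sdiff_singleton ht

end Dynamics

section RootedTree

variable {α : Type*} [DecidableEq α] {t : α} {p : α → α}

/-- `p` is the parent map of a spanning tree directed toward the root `t`. -/
def IsRootedTree (t : α) (p : α → α) : Prop :=
  p t = t ∧ ∀ v, ∃ m, p^[m] v = t

namespace IsRootedTree

variable (hp : IsRootedTree t p)

noncomputable def depth (v : α) : ℕ := Nat.find (hp.2 v)

theorem iterate_depth (v : α) : p^[hp.depth v] v = t := Nat.find_spec (hp.2 v)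

theorem iterate_ne_of_lt_depth {v : α} {j : ℕ} (hj : j < hp.depth v) : p^[j] v ≠ t :=
  Nat.find_min (hp.2 v) hj

theorem depth_eq_iff {v : α} {m : ℕ} :
    hp.depth v = m ↔ p^[m] v = t ∧ ∀ j < m, p^[j] v ≠ t :=
  Nat.find_eq_iff (hp.2 v)

theorem depth_root : hp.depth t = 0 :=
  (hp.depth_eq_iff).2 ⟨rfl, by simp⟩

theorem depth_apply {v : α} (hv : v ≠ t) : hp.depth v = hp.depth (p v) + 1 := by
  refine (hp.depth_eq_iff).2 ⟨by rw [iterate_succ_apply, hp.iterate_depth], fun j hj => ?_⟩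
  rcases j with _ | j
  · exact hv
  · rw [iterate_succ_apply]
    exact hp.iterate_ne_of_lt_depth (by omega)

theorem iterate_injOn_depth {v : α} : (Iic (hp.depth v)).InjOn (p^[·] v) := by
  suffices ∀ i j, i < j → j ≤ hp.depth v → p^[i] v ≠ p^[j] v by
    intro i hi j hj hij
    by_contra hne
    rcases Nat.lt_or_gt_of_ne hne with h | h
    · exact this i j h hj hij
    · exact this j i h hi hij.symm
  intro i j hij hj he
  refine hp.iterate_ne_of_lt_depth (v := v) (j := hp.depth v - j + i) (by omega) ?_
  rw [iterate_add_apply, he, ← iterate_add_apply, Nat.sub_add_cancel hj, hp.iterate_depth]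

theorem nodup_map_iterate_range {v : α} {k : ℕ} (hk : k ≤ hp.depth v + 1) :
    ((List.range k).map (p^[·] v)).Nodup :=
  (List.nodup_range).map_on fun i hi j hj => hp.iterate_injOn_depth
    (mem_Iic.2 (by simp at hi; omega)) (mem_Iic.2 (by simp at hj; omega))

theorem apply_ne (hp : IsRootedTree t p) {v : α} (hv : v ≠ t) : p v ≠ v := fun h => by
  have := hp.depth_apply hv
  rw [h] at this
  omega

/-- The path from `v` to `t`, without `t`. -/
noncomputable def pathToRoot (v : α) : List α := (List.range (hp.depth v)).map (p^[·] v)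

theorem length_pathToRoot (v : α) : (hp.pathToRoot v).length = hp.depth v := by
  simp [pathToRoot]

theorem getElem_pathToRoot {v : α} {i : ℕ} (hi : i < (hp.pathToRoot v).length) :
    (hp.pathToRoot v)[i] = p^[i] v := by
  simp [pathToRoot]

theorem getD_pathToRoot {v : α} {i : ℕ} (hi : i ≤ hp.depth v) :
    (hp.pathToRoot v).getD i t = p^[i] v := by
  rcases hi.lt_or_eq with hi | rfl
  · rw [List.getD_eq_getElem _ _ (by rwa [length_pathToRoot]), getElem_pathToRoot]
  · rw [List.getD_eq_default _ _ (by rw [length_pathToRoot]), hp.iterate_depth]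

theorem mem_pathToRoot {v x : α} : x ∈ hp.pathToRoot v ↔ ∃ i < hp.depth v, p^[i] v = x := by
  simp [pathToRoot, eq_comm]

theorem nodup_pathToRoot (v : α) : (hp.pathToRoot v).Nodup :=
  hp.nodup_map_iterate_range (by omega)

theorem root_not_mem_pathToRoot (v : α) : t ∉ hp.pathToRoot v := by
  rw [mem_pathToRoot]
  rintro ⟨i, hi, h⟩
  exact hp.iterate_ne_of_lt_depth hi h

/-- The path from `v` to `t`, without `v`. -/
noncomputable def treePath (v : α) : List α := (List.range (hp.depth v)).map (p^[·] (p v))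

theorem treePath_root : hp.treePath t = [] := by
  simp [treePath, depth_root]

theorem cons_treePath (v : α) :
    v :: hp.treePath v = (List.range (hp.depth v + 1)).map (p^[·] v) := by
  rw [List.range_succ_eq_map, List.map_cons, List.map_map]
  rfl

theorem treePath_of_ne {v : α} (hv : v ≠ t) : hp.treePath v = p v :: hp.treePath (p v) := by
  have h := hp.cons_treePath (p v)
  rw [← hp.depth_apply hv] at h
  exact h.symm

theorem nodup_cons_treePath (v : α) : (v :: hp.treePath v).Nodup := by
  rw [cons_treePath]
  exact hp.nodup_map_iterate_range le_rfl

end IsRootedTree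

end RootedTree

section Unroll

variable {α : Type*} [Finite α] {t x : α} {g : α → α}

/-- `Finset.toList` orders the periodic points other than `t` in a way that depends only on the
set; this plays the role of the linear order in Joyal's bijection. -/
noncomputable def cycleKeys (g : α → α) (t : α) : List α :=
  (Set.toFinite (periodicPts g \ {t})).toFinset.toList

noncomputable def cycleWord (g : α → α) (t : α) : List α := (cycleKeys g t).map g

theorem mem_cycleKeys : x ∈ cycleKeys g t ↔ x ∈ periodicPts g \ {t} := by
  simp [cycleKeys]

theorem mem_cycleWord (hg : g t = t) : x ∈ cycleWord g t ↔ x ∈ periodicPts g \ {t} := by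
  have h := bijOn_periodicPts_diff_singleton hg
  simp only [cycleWord, List.mem_map, mem_cycleKeys]
  exact ⟨fun ⟨y, hy, hyx⟩ => hyx ▸ h.mapsTo hy, fun hx => h.surjOn hx⟩

theorem nodup_cycleWord (hg : g t = t) : (cycleWord g t).Nodup :=
  (Finset.nodup_toList _).map_on fun _ hx _ hy =>
    (bijOn_periodicPts_diff_singleton hg).injOn (mem_cycleKeys.1 hx) (mem_cycleKeys.1 hy)

theorem root_not_mem_cycleWord (hg : g t = t) : t ∉ cycleWord g t := by
  simp [mem_cycleWord hg]

variable [DecidableEq α]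

theorem cycleKeys_eq_toList {l : List α} (hl : ∀ x, x ∈ l ↔ x ∈ periodicPts g \ {t}) :
    cycleKeys g t = l.toFinset.toList := by
  unfold cycleKeys
  congr 1
  ext x
  rw [Finite.mem_toFinset, List.mem_toFinset, hl]

/-- Joyal's unrolling: the cycles of `g` away from `t`, read as the word `cycleWord g t`,
become a path ending at `t`; off the cycles nothing changes. -/
noncomputable def unrollParent (g : α → α) (t : α) (x : α) : α :=
  if x ∈ cycleWord g t then (cycleWord g t).getD ((cycleWord g t).idxOf x + 1) t else g x

theorem unrollParent_of_not_mem (hx : x ∉ cycleWord g t) : unrollParent g t x = g x :=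
  if_neg hx

theorem unrollParent_getD (hg : g t = t) (i : ℕ) :
    unrollParent g t ((cycleWord g t).getD i t) = (cycleWord g t).getD (i + 1) t := by
  rcases lt_or_ge i (cycleWord g t).length with hi | hi
  · rw [List.getD_eq_getElem _ _ hi, unrollParent, if_pos (List.getElem_mem hi),
      (nodup_cycleWord hg).idxOf_getElem]
  · rw [List.getD_eq_default _ _ hi, List.getD_eq_default _ _ (by omega),
      unrollParent_of_not_mem (root_not_mem_cycleWord hg), hg]

theorem iterate_unrollParent_getD (hg : g t = t) (i j : ℕ) :
    (unrollParent g t)^[j] ((cycleWord g t).getD i t) = (cycleWord g t).getD (i + j) t := by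
  induction j with
  | zero => rfl
  | succ j ih => rw [iterate_succ_apply', ih, unrollParent_getD hg, Nat.add_assoc]

theorem isRootedTree_unrollParent (hg : g t = t) : IsRootedTree t (unrollParent g t) := by
  have hroot : unrollParent g t t = t := by
    rw [unrollParent_of_not_mem (root_not_mem_cycleWord hg), hg]
  refine ⟨hroot, fun x => ?_⟩
  have hcycle : ∀ y ∈ periodicPts g, ∃ m, (unrollParent g t)^[m] y = t := by
    intro y hy
    by_cases hyt : y = t
    · exact ⟨0, hyt⟩
    have hyw : y ∈ cycleWord g t := (mem_cycleWord hg).2 ⟨hy, hyt⟩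
    refine ⟨(cycleWord g t).length, ?_⟩
    rw [← List.getElem_idxOf (List.idxOf_lt_length_iff.2 hyw), ← List.getD_eq_getElem _ t,
      iterate_unrollParent_getD hg, List.getD_eq_default _ _ (by omega)]
  obtain ⟨m, hm⟩ := Finite.exists_iterate_mem_periodicPts g x
  have heq : EqOn g (unrollParent g t) (periodicPts g)ᶜ := fun y hy =>
    (unrollParent_of_not_mem fun hyw => hy ((mem_cycleWord hg).1 hyw).1).symm
  obtain ⟨k, hk⟩ := exists_iterate_mem_of_eqOn_compl heq hm
  obtain ⟨j, hj⟩ := hcycle _ hk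
  exact ⟨j + k, by rw [iterate_add_apply, hj]⟩

end Unroll

namespace IsRootedTree

variable {α : Type*} [DecidableEq α] {t x : α} {p : α → α}
  (hp : IsRootedTree t p) (v : α)

/-- Inverse of `unrollParent`: the path from `v` to `t`, read against the fixed order of its
vertex set, is wound up into cycles. -/
noncomputable def rollUp (x : α) : α :=
  if x ∈ hp.pathToRoot v then p^[(hp.pathToRoot v).toFinset.toList.idxOf x] v else p x

theorem length_toList_pathToRoot : (hp.pathToRoot v).toFinset.toList.length = hp.depth v := by
  rw [Finset.length_toList, List.toFinset_card_of_nodup (hp.nodup_pathToRoot v),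
    length_pathToRoot]

theorem rollUp_of_not_mem (hx : x ∉ hp.pathToRoot v) : hp.rollUp v x = p x := if_neg hx

theorem rollUp_root : hp.rollUp v t = t := by
  rw [rollUp_of_not_mem _ _ (hp.root_not_mem_pathToRoot v), hp.1]

theorem rollUp_of_mem (hx : x ∈ hp.pathToRoot v) :
    hp.rollUp v x = p^[(hp.pathToRoot v).toFinset.toList.idxOf x] v ∧
      (hp.pathToRoot v).toFinset.toList.idxOf x < hp.depth v := by
  refine ⟨if_pos hx, ?_⟩
  rw [← length_toList_pathToRoot, List.idxOf_lt_length_iff]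
  simpa using hx

theorem rollUp_mem (hx : x ∈ hp.pathToRoot v) : hp.rollUp v x ∈ hp.pathToRoot v := by
  obtain ⟨h, hlt⟩ := hp.rollUp_of_mem v hx
  exact h ▸ hp.mem_pathToRoot.2 ⟨_, hlt, rfl⟩

theorem injOn_rollUp : InjOn (hp.rollUp v) {x | x ∈ hp.pathToRoot v} := by
  intro x hx y hy hxy
  obtain ⟨hx', hxlt⟩ := hp.rollUp_of_mem v hx
  obtain ⟨hy', hylt⟩ := hp.rollUp_of_mem v hy
  rw [hx', hy'] at hxy
  have hidx := hp.iterate_injOn_depth (mem_Iic.2 hxlt.le) (mem_Iic.2 hylt.le) hxy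
  have hx'' : x ∈ (hp.pathToRoot v).toFinset.toList := by simpa using hx
  have hy'' : y ∈ (hp.pathToRoot v).toFinset.toList := by simpa using hy
  rw [← List.getElem_idxOf (List.idxOf_lt_length_iff.2 hx''),
    ← List.getElem_idxOf (List.idxOf_lt_length_iff.2 hy'')]
  simp only [hidx]

theorem periodicPts_rollUp : periodicPts (hp.rollUp v) = insert t {x | x ∈ hp.pathToRoot v} := by
  have ht := hp.root_not_mem_pathToRoot v
  refine periodicPts_eq_of_mapsTo_of_injOn ((List.finite_toSet _).insert t) ?_ ?_ fun x => ?_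
  · rintro x (rfl | hx)
    · exact Or.inl (hp.rollUp_root v)
    · exact Or.inr (hp.rollUp_mem v hx)
  · refine (injOn_insert (s := {x | x ∈ hp.pathToRoot v}) ht).2 ⟨hp.injOn_rollUp v, ?_⟩
    rintro ⟨y, hy, hyt⟩
    have hmem := hp.rollUp_mem v hy
    rw [hyt, hp.rollUp_root v] at hmem
    exact ht hmem
  · have heq : EqOn p (hp.rollUp v) (insert t {x | x ∈ hp.pathToRoot v})ᶜ := fun y hy =>
      (hp.rollUp_of_not_mem v fun hyL => hy (Or.inr hyL)).symm
    exact exists_iterate_mem_of_eqOn_compl heq (Or.inl (hp.iterate_depth x))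

theorem cycleKeys_rollUp [Finite α] :
    cycleKeys (hp.rollUp v) t = (hp.pathToRoot v).toFinset.toList := by
  refine cycleKeys_eq_toList fun x => ?_
  rw [periodicPts_rollUp, insert_sdiff_self_of_notMem]
  · rfl
  · exact hp.root_not_mem_pathToRoot v

theorem cycleWord_rollUp [Finite α] : cycleWord (hp.rollUp v) t = hp.pathToRoot v := by
  rw [cycleWord, cycleKeys_rollUp]
  refine List.ext_getElem (by rw [List.length_map, length_toList_pathToRoot,
    length_pathToRoot]) fun i hi _ => ?_
  have hmem : (hp.pathToRoot v).toFinset.toList[i]'(by simpa using hi) ∈ hp.pathToRoot v :=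
    List.mem_toFinset.1 (Finset.mem_toList.1 (List.getElem_mem _))
  rw [List.getElem_map, (hp.rollUp_of_mem v hmem).1, (Finset.nodup_toList _).idxOf_getElem,
    getElem_pathToRoot]

theorem unrollParent_rollUp [Finite α] : unrollParent (hp.rollUp v) t = p := by
  funext x
  by_cases hx : x ∈ hp.pathToRoot v
  · have hi := List.idxOf_lt_length_iff.2 hx
    rw [unrollParent, cycleWord_rollUp, if_pos hx, hp.getD_pathToRoot (by
      rw [← length_pathToRoot]; omega), iterate_succ_apply', ← hp.getD_pathToRoot (by
      rw [← length_pathToRoot]; omega), List.getD_eq_getElem _ _ hi, List.getElem_idxOf]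
  · rw [unrollParent_of_not_mem (by rwa [cycleWord_rollUp]), rollUp_of_not_mem _ _ hx]

theorem getD_cycleWord_rollUp_zero [Finite α] : (cycleWord (hp.rollUp v) t).getD 0 t = v := by
  rw [cycleWord_rollUp, hp.getD_pathToRoot (Nat.zero_le _), iterate_zero_apply]

end IsRootedTree

section Count

variable {α : Type*} [Finite α] [DecidableEq α] {t : α} {g : α → α}

theorem pathToRoot_unrollParent (hg : g t = t) :
    (isRootedTree_unrollParent hg).pathToRoot ((cycleWord g t).getD 0 t) = cycleWord g t := by
  set hp := isRootedTree_unrollParent hg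
  have hiter (j : ℕ) : (unrollParent g t)^[j] ((cycleWord g t).getD 0 t) =
      (cycleWord g t).getD j t := by
    rw [iterate_unrollParent_getD hg, Nat.zero_add]
  have hdepth : hp.depth ((cycleWord g t).getD 0 t) = (cycleWord g t).length := by
    refine hp.depth_eq_iff.2 ⟨by rw [hiter, List.getD_eq_default _ _ le_rfl], fun j hj => ?_⟩
    rw [hiter, List.getD_eq_getElem _ _ hj]
    intro h
    have hmem := List.getElem_mem hj
    rw [h] at hmem
    exact root_not_mem_cycleWord hg hmem
  refine List.ext_getElem (by rw [hp.length_pathToRoot, hdepth]) fun i hi hi' => ?_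
  rw [hp.getElem_pathToRoot, hiter, List.getD_eq_getElem _ _ hi']

theorem rollUp_unrollParent (hg : g t = t) :
    (isRootedTree_unrollParent hg).rollUp ((cycleWord g t).getD 0 t) = g := by
  have hkeys : (cycleWord g t).toFinset.toList = cycleKeys g t :=
    (cycleKeys_eq_toList fun _ => mem_cycleWord hg).symm
  funext x
  by_cases hx : x ∈ cycleWord g t
  · have hxK : x ∈ cycleKeys g t := mem_cycleKeys.2 ((mem_cycleWord hg).1 hx)
    have hi := List.idxOf_lt_length_iff.2 hxK
    rw [IsRootedTree.rollUp, pathToRoot_unrollParent hg, if_pos hx, hkeys,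
      iterate_unrollParent_getD hg, Nat.zero_add, cycleWord,
      List.getD_eq_getElem _ _ (by rwa [List.length_map]), List.getElem_map,
      List.getElem_idxOf]
  · rw [IsRootedTree.rollUp_of_not_mem _ _ (by rwa [pathToRoot_unrollParent hg]),
      unrollParent_of_not_mem hx]

variable (t) in
/-- The extra vertex is the start of the path onto which the cycles are unrolled. -/
noncomputable def fixingEquivRootedTreeProd :
    {g : α → α // g t = t} ≃ {p : α → α // IsRootedTree t p} × α where
  toFun g := (⟨unrollParent g t, isRootedTree_unrollParent g.2⟩, (cycleWord g t).getD 0 t)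
  invFun pv := ⟨pv.1.2.rollUp pv.2, pv.1.2.rollUp_root pv.2⟩
  left_inv g := Subtype.ext (rollUp_unrollParent g.2)
  right_inv pv := Prod.ext (Subtype.ext (pv.1.2.unrollParent_rollUp pv.2))
    (pv.1.2.getD_cycleWord_rollUp_zero pv.2)

theorem card_selfMaps_fixing (t : α) :
    Nat.card {g : α → α // g t = t} = Nat.card α ^ (Nat.card α - 1) := by
  let e : {g : α → α // g t = t} ≃ ({x // x ≠ t} → α) :=
    { toFun g x := g.1 x
      invFun h := ⟨fun x => if hx : x = t then t else h ⟨x, hx⟩, dif_pos rfl⟩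
      left_inv g := Subtype.ext (funext fun x => by by_cases hx : x = t <;> simp [hx, g.2])
      right_inv h := funext fun x => dif_neg x.2 }
  have := Fintype.ofFinite α
  rw [Nat.card_congr e, Nat.card_fun]
  simp [Nat.card_eq_fintype_card]

theorem card_rootedTree (t : α) :
    Nat.card {p : α → α // IsRootedTree t p} = Nat.card α ^ (Nat.card α - 2) := by
  have hcard := (Nat.card_congr (fixingEquivRootedTreeProd t)).symm
  rw [Nat.card_prod, card_selfMaps_fixing] at hcard
  have hpos : 0 < Nat.card α := Nat.card_pos_iff.2 ⟨⟨t⟩, inferInstance⟩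
  rcases Nat.lt_or_ge (Nat.card α) 2 with h | h
  · obtain h1 : Nat.card α = 1 := by omega
    simpa [h1] using hcard
  · rw [show Nat.card α - 1 = Nat.card α - 2 + 1 by omega, pow_succ] at hcard
    exact Nat.eq_of_mul_eq_mul_right hpos hcard

end Count

namespace List

variable {α : Type*} {t u w : α} {l l' : List α}

theorem fst_ne_snd_of_mem_zip_cons (hl : (u :: l).Nodup) {e : α × α}
    (he : e ∈ (u :: l).zip l) : e.1 ≠ e.2 := by
  induction l generalizing u with
  | nil => simp at he
  | cons x l ih =>
    rw [zip_cons_cons, mem_cons] at he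
    rcases he with rfl | he
    · intro h
      exact (nodup_cons.1 hl).1 (by simp only at h; simp [h])
    · exact ih (nodup_cons.1 hl).2 he

theorem head?_eq_of_mem_zip_cons (hl : (u :: l).Nodup) (h : (u, w) ∈ (u :: l).zip l) :
    l.head? = some w := by
  cases l with
  | nil => simp at h
  | cons x l =>
    rw [zip_cons_cons, mem_cons] at h
    rcases h with h | h
    · rw [(Prod.mk.inj h).2, head?_cons]
    · exact absurd (of_mem_zip h).1 (nodup_cons.1 hl).1

theorem eq_nil_of_getLast?_cons_self (hl : (u :: l).Nodup) (h : (u :: l).getLast? = some u) :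
    l = [] := by
  cases l with
  | nil => rfl
  | cons x l =>
    rw [getLast?_cons_cons] at h
    exact absurd (mem_of_mem_getLast? h) (nodup_cons.1 hl).1

theorem eq_of_forall_mem_zip (hl : (u :: l).getLast? = some t) (hlu : (u :: l).Nodup)
    (hl' : (u :: l').getLast? = some t) (hlu' : (u :: l').Nodup)
    (h : ∀ e ∈ (u :: l).zip l, e ∈ (u :: l').zip l') : l = l' := by
  induction l generalizing u l' with
  | nil =>
    obtain rfl : u = t := by simpa using hl
    exact (eq_nil_of_getLast?_cons_self hlu' hl').symm
  | cons v l ih =>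
    cases l' with
    | nil =>
      obtain rfl : u = t := by simpa using hl'
      exact eq_nil_of_getLast?_cons_self hlu hl
    | cons v' l' =>
      have huv := h (u, v) (by simp)
      rw [zip_cons_cons, mem_cons] at huv
      obtain rfl : v = v' := by
        rcases huv with huv | huv
        · exact (Prod.ext_iff.1 huv).2
        · exact absurd (of_mem_zip huv).1 (nodup_cons.1 hlu').1
      refine congrArg (v :: ·) (ih (by rwa [getLast?_cons_cons] at hl) (nodup_cons.1 hlu).2
        (by rwa [getLast?_cons_cons] at hl') (nodup_cons.1 hlu').2 fun e he => ?_)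
      have he' := h e (by rw [zip_cons_cons]; exact mem_cons_of_mem _ he)
      rw [zip_cons_cons, mem_cons] at he'
      refine he'.resolve_left fun heq => (nodup_cons.1 hlu).1 ?_
      rw [heq] at he
      exact (of_mem_zip he).1

end List

section CompleteDigraph

variable {n : ℕ}

/-- The matrix `D` of the complete digraph: `x_{uv}` on the arc `(u, v)`, no loops. -/
def freeArcWeights (n : ℕ) : Fin n → Fin n → Entry {p : Fin n × Fin n // p.1 ≠ p.2} :=
  fun u v => if h : u = v then none else some (0, some ⟨(u, v), h⟩)

theorem eq_freeArcWeights {E : Fin n → Fin n → Entry {p : Fin n × Fin n // p.1 ≠ p.2}}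
    (hE : ∀ u v : Fin n, ∀ h : u ≠ v, E u v = some (0, some ⟨(u, v), h⟩))
    (hEdiag : ∀ u : Fin n, E u u = none) : E = freeArcWeights n := by
  funext u v
  by_cases h : u = v
  · subst h
    simp [freeArcWeights, hEdiag]
  · simp [freeArcWeights, hE u v h, h]

theorem entryEval_freeArcWeights_nonneg {x : {p : Fin n × Fin n // p.1 ≠ p.2} → ℝ}
    (hx : ∀ a, 0 ≤ x a) (u v : Fin n) : 0 ≤ entryEval (freeArcWeights n u v) x := by
  unfold freeArcWeights
  split_ifs
  · exact le_rfl
  · simpa [entryEval] using hx _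

theorem entryEval_freeArcWeights_single (a : {p : Fin n × Fin n // p.1 ≠ p.2}) (u v : Fin n) :
    entryEval (freeArcWeights n u v) (Pi.single a 1) = if (u, v) = a.1 then 1 else 0 := by
  unfold freeArcWeights
  split_ifs with huv hua hua
  · exact absurd (huv ▸ hua ▸ a.2) (by simp)
  · rfl
  all_goals simp [entryEval, Subtype.ext_iff, hua]

theorem walkFn_freeArcWeights_nonneg {x : {p : Fin n × Fin n // p.1 ≠ p.2} → ℝ}
    (hx : ∀ a, 0 ≤ x a) (u : Fin n) (l : List (Fin n)) :
    0 ≤ walkFn (freeArcWeights n) u l x := by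
  induction l generalizing u with
  | nil => exact le_rfl
  | cons v l ih => exact add_nonneg (entryEval_freeArcWeights_nonneg hx u v) (ih v)

theorem walkFn_freeArcWeights_single (a : {p : Fin n × Fin n // p.1 ≠ p.2}) (u : Fin n)
    (l : List (Fin n)) :
    walkFn (freeArcWeights n) u l (Pi.single a 1) = ((u :: l).zip l).count a.1 := by
  induction l generalizing u with
  | nil => simp [walkFn]
  | cons v l ih =>
    change entryEval _ (Pi.single a 1) + walkFn _ v l (Pi.single a 1) = _
    rw [entryEval_freeArcWeights_single, ih, List.zip_cons_cons, List.count_cons]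
    simp only [beq_iff_eq]
    split_ifs <;> push_cast <;> ring

theorem not_walkFn_le_of_ne {t u : Fin n} {l l' : List (Fin n)} (hl : l.getLast? = some t)
    (hlu : (u :: l).Nodup) (hl' : l'.getLast? = some t) (hlu' : (u :: l').Nodup)
    (hne : l ≠ l') :
    ¬ leOn (fun x => ∀ a, 0 ≤ x a) (walkFn (freeArcWeights n) u l)
      (walkFn (freeArcWeights n) u l') := by
  obtain ⟨e, he, he'⟩ : ∃ e ∈ (u :: l).zip l, e ∉ (u :: l').zip l' := by
    by_contra! h
    exact hne (List.eq_of_forall_mem_zip (t := t) (by simp [List.getLast?_cons, hl]) hlu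
      (by simp [List.getLast?_cons, hl']) hlu' h)
  intro hle
  have key := hle (Pi.single ⟨e, List.fst_ne_snd_of_mem_zip_cons hlu he⟩ 1)
    (fun b => by rw [Pi.single_apply]; split_ifs <;> norm_num)
  rw [walkFn_freeArcWeights_single, walkFn_freeArcWeights_single,
    List.count_eq_zero.2 he', Nat.cast_le] at key
  change ((u :: l).zip l).count e ≤ 0 at key
  have := List.count_pos_iff.2 he
  omega

theorem isSPT_freeArcWeights {t : Fin n} {par : Fin n → Fin n} (hp : IsRootedTree t par) :
    IsSPT (freeArcWeights n) (fun x => ∀ a, 0 ≤ x a) t par := by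
  refine ⟨hp.1, hp.2, fun v hv => by simp [freeArcWeights, (hp.apply_ne hv).symm],
    fun v => walkFn (freeArcWeights n) v (hp.treePath v), by simp only [hp.treePath_root]; rfl,
    fun v hv => by simp only [hp.treePath_of_ne hv]; rfl, fun v w hvw => ?_⟩
  have hne : v ≠ w := fun h => by simp [h, freeArcWeights] at hvw
  by_cases hw : par v = w
  · subst hw
    have hv : v ≠ t := fun h => hne (by rw [h, hp.1])
    simp only [hp.treePath_of_ne hv]
    exact fun h => h.2 h.1
  rintro ⟨hle, -⟩
  set x : {p : Fin n × Fin n // p.1 ≠ p.2} → ℝ := Pi.single ⟨(v, w), hne⟩ 1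
  have hx : ∀ b, 0 ≤ x b := fun b => by simp only [x, Pi.single_apply]; split_ifs <;> norm_num
  have hvw_not_mem : (v, w) ∉ (v :: hp.treePath v).zip (hp.treePath v) := fun hmem => by
    have hhead := List.head?_eq_of_mem_zip_cons (hp.nodup_cons_treePath v) hmem
    by_cases hv : v = t
    · simp [hv, hp.treePath_root] at hhead
    · simp [hp.treePath_of_ne hv, hw] at hhead
  have hv0 : walkFn (freeArcWeights n) v (hp.treePath v) x = 0 := by
    rw [walkFn_freeArcWeights_single, List.count_eq_zero.2 hvw_not_mem, Nat.cast_zero]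
  have hvw1 : entryEval (freeArcWeights n v w) x = 1 := by
    rw [entryEval_freeArcWeights_single, if_pos rfl]
  have hw0 := walkFn_freeArcWeights_nonneg hx w (hp.treePath w)
  have := hle x hx
  simp only at this
  linarith

end CompleteDigraph

theorem complete_graph_spt_count_general {n : ℕ} (t : Fin n)
    (E : Fin n → Fin n → Entry {p : Fin n × Fin n // p.1 ≠ p.2})
    (hE : ∀ u v : Fin n, ∀ h : u ≠ v, E u v = some (0, some ⟨(u, v), h⟩))
    (hEdiag : ∀ u : Fin n, E u u = none) :
    (∀ (u : Fin n) (l l' : List (Fin n)),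
        l.getLast? = some t → (u :: l).Nodup →
        l'.getLast? = some t → (u :: l').Nodup → l ≠ l' →
        ¬ leOn (fun x => ∀ a, 0 ≤ x a) (walkFn E u l) (walkFn E u l') ∧
        ¬ leOn (fun x => ∀ a, 0 ≤ x a) (walkFn E u l') (walkFn E u l)) ∧
    (∀ par : Fin n → Fin n, par t = t → (∀ v, ∃ m : ℕ, par^[m] v = t) →
        IsSPT E (fun x => ∀ a, 0 ≤ x a) t par) ∧
    {par : Fin n → Fin n | IsSPT E (fun x => ∀ a, 0 ≤ x a) t par}.ncard = n ^ (n - 2) := by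
  obtain rfl := eq_freeArcWeights hE hEdiag
  have hSPT : {par | IsSPT (freeArcWeights n) (fun x => ∀ a, 0 ≤ x a) t par} =
      {par | IsRootedTree t par} :=
    Set.ext fun par => ⟨fun h => ⟨h.1, h.2.1⟩, isSPT_freeArcWeights⟩
  refine ⟨fun u l l' hl hlu hl' hlu' hne =>
      ⟨not_walkFn_le_of_ne hl hlu hl' hlu' hne, not_walkFn_le_of_ne hl' hlu' hl hlu hne.symm⟩,
    fun par h0 hre => isSPT_freeArcWeights ⟨h0, hre⟩, ?_⟩
  rw [hSPT, ← Nat.card_coe_set_eq]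
  exact (card_rootedTree t).trans (by rw [Nat.card_fin])

/-- in the complete directed graph on `n ≥ 2` nodes in which every arc
`(u,v)`, `u ≠ v`, carries its own indeterminate weight `x_{uv}`, any two distinct simple
directed paths with the same start node and end node `t` have incomparable weights on
the domain `[0,∞)^{n²-n}`; consequently every directed spanning tree toward `t` is a
shortest-path tree, and the number of shortest-path trees with target `t` is exactly
`n^{n-2}`. -/
theorem complete_graph_spt_count {n : ℕ} (hn : 2 ≤ n) (t : Fin n)
    (E : Fin n → Fin n → Entry {p : Fin n × Fin n // p.1 ≠ p.2})
    (hE : ∀ u v : Fin n, ∀ h : u ≠ v, E u v = some (0, some ⟨(u, v), h⟩))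
    (hEdiag : ∀ u : Fin n, E u u = none) :
    (∀ (u : Fin n) (l l' : List (Fin n)),
        l.getLast? = some t → (u :: l).Nodup →
        l'.getLast? = some t → (u :: l').Nodup → l ≠ l' →
        ¬ leOn (fun x => ∀ a, 0 ≤ x a) (walkFn E u l) (walkFn E u l') ∧
        ¬ leOn (fun x => ∀ a, 0 ≤ x a) (walkFn E u l') (walkFn E u l)) ∧
    (∀ par : Fin n → Fin n, par t = t → (∀ v, ∃ m : ℕ, par^[m] v = t) →
        IsSPT E (fun x => ∀ a, 0 ≤ x a) t par) ∧
    {par : Fin n → Fin n | IsSPT E (fun x => ∀ a, 0 ≤ x a) t par}.ncard = n ^ (n - 2) :=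
  complete_graph_spt_count_general t E hE hEdiag
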